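/- Let Cov(·,U) be the least predicate closed under Der_{I,C,U} (written a ◁ U) and CoPos(·,V) the greatest predicate consistent for Conf_{I,C,V} (written a ⋉ V). Then the following compatibility holds: for all a, U, V, if CoPos(a,V) and Cov(a,U), then there exists x with U x and CoPos(x,V), i.e. if a ⋉ V and a ◁ U then there exists x ∈ U with x ⋉ V. -/
import Mathlib

theorem stmt_19 {A : Type*} (I : A → Type*) (C : (x : A) → I x → Set A)
    (Cov : A → Set A → Prop)
    (hCov : ∀ a U, Cov a U ↔
      ∀ P : A → Prop, (∀ x ∈ U, P x) →
        (∀ x, ∀ y : I x, (∀ z ∈ C x y, P z) → P x) → P a)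
    (CoPos : A → Set A → Prop)
    (hCoPos : ∀ a V, CoPos a V ↔
      ∃ P : A → Prop, (∀ x, P x → x ∈ V) ∧
        (∀ x, P x → ∀ y : I x, ∃ z ∈ C x y, P z) ∧ P a) :
    ∀ (a : A) (U V : Set A), CoPos a V → Cov a U → ∃ x, x ∈ U ∧ CoPos x V := by
  intro a U V hpos hcov
  obtain ⟨P, hPV, hPstep, hPa⟩ := (hCoPos a V).mp hpos
  have key := (hCov a U).mp hcov (fun x => P x → ∃ u, u ∈ U ∧ CoPos u V)
    (fun x hxU hPx => ⟨x, hxU, (hCoPos x V).mpr ⟨P, hPV, hPstep, hPx⟩⟩)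
    (fun x y ih hPx => by
      obtain ⟨z, hz, hPz⟩ := hPstep x hPx y
      exact ih z hz hPz)
  exact key hPa
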